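/- arXiv:1906.03707 — 4 statements merged into one kernel-verified Lean document; each statement's English description precedes it below -/
import Mathlib

section
/- Suppose f is a monotone submodular function on a finite ground set, A ⊆ B, |B \ A| ≤ k, and a* maximizes the marginal gain f(A ∪ {a}) - f(A) over all elements a of the ground set not in A. Then f(A ∪ {a*}) - f(A) ≥ (f(B) - f(A)) / k. -/
/-!
Submodularity bounds the gain of adding the elements of `B \ A` to `A` one at a time by the sum
of their individual gains over `A`, each of which is at most the best gain `f (A ∪ {a}) - f A`;
that gain is nonnegative by monotonicity, so `f B - f A ≤ |B \ A| · gain ≤ k · gain`.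
-/

open Finset

theorem sub_le_sum_insert_sub_of_submodular {U : Type*} [DecidableEq U] (f : Finset U → ℝ)
    (hsub : ∀ (A B : Finset U), A ⊆ B → ∀ x ∉ B,
      f (insert x B) - f B ≤ f (insert x A) - f A)
    (A S : Finset U) (hAS : Disjoint A S) :
    f (A ∪ S) - f A ≤ ∑ x ∈ S, (f (insert x A) - f A) := by
  induction S using Finset.induction_on with
  | empty => simp
  | @insert x S hxS ih =>
    obtain ⟨hxA, hAS⟩ := disjoint_insert_right.mp hAS
    have hx : x ∉ A ∪ S := by simp [hxA, hxS]
    have hstep := hsub A (A ∪ S) subset_union_left x hx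
    rw [union_insert, sum_insert hxS]
    linarith [ih hAS]

theorem greedy_marginal_gain_general {U : Type*} [DecidableEq U]
    (f : Finset U → ℝ)
    (hmono : ∀ A B : Finset U, A ⊆ B → f A ≤ f B)
    (hsub : ∀ (A B : Finset U), A ⊆ B → ∀ x ∉ B,
      f (insert x B) - f B ≤ f (insert x A) - f A)
    (A B : Finset U) (k : ℕ)
    (hcard : (B \ A).card ≤ k)
    (a : U)
    (hbest : ∀ b ∉ A, f (insert b A) - f A ≤ f (insert a A) - f A) :
    (f B - f A) / k ≤ f (insert a A) - f A := by
  set g := f (insert a A) - f A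
  have hg : 0 ≤ g := sub_nonneg.mpr (hmono _ _ (subset_insert a A))
  refine div_le_of_le_mul₀ k.cast_nonneg hg ?_
  calc f B - f A ≤ f (A ∪ (B \ A)) - f A := by
        rw [union_sdiff_self_eq_union]
        linarith [hmono B (A ∪ B) subset_union_right]
    _ ≤ ∑ x ∈ B \ A, (f (insert x A) - f A) :=
        sub_le_sum_insert_sub_of_submodular f hsub A (B \ A) disjoint_sdiff
    _ ≤ ∑ _x ∈ B \ A, g := sum_le_sum fun x hx => hbest x (mem_sdiff.mp hx).2
    _ = (B \ A).card * g := by rw [sum_const, nsmul_eq_mul]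
    _ ≤ g * k := by rw [mul_comm]; gcongr

/-- The best marginal gain over elements outside `A` is at least
`(f B - f A) / k` when `|B \ A| ≤ k`, for monotone submodular `f`. -/
theorem greedy_marginal_gain {U : Type*} [Fintype U] [DecidableEq U]
    (f : Finset U → ℝ)
    (hmono : ∀ A B : Finset U, A ⊆ B → f A ≤ f B)
    (hsub : ∀ (A B : Finset U), A ⊆ B → ∀ x ∉ B,
      f (insert x B) - f B ≤ f (insert x A) - f A)
    (A B : Finset U) (hAB : A ⊆ B) (k : ℕ) (hk : 1 ≤ k)
    (hcard : (B \ A).card ≤ k)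
    (a : U) (ha : a ∉ A)
    (hbest : ∀ b ∉ A, f (insert b A) - f A ≤ f (insert a A) - f A) :
    (f B - f A) / k ≤ f (insert a A) - f A :=
  greedy_marginal_gain_general f hmono hsub A B k hcard a hbest
end

section
/- Let Aggregate be a commutative and associative binary operation on a type H, extended to nonempty finite multisets. For a HAG Ĝ (finite DAG over V ∪ V_A) define cover(v) = {v} if v has no in-neighbors, and cover(v) = ∪_{u ∈ N̂_v} cover(u) otherwise. If the covers of the in-neighbors of every node are pairwise disjoint, then aggr(v) = Aggregate({h_u : u ∈ cover(v)}) for every node v, where aggr(v) = h_v on sources and aggr(v) = Aggregate({aggr(u) : u ∈ N̂_v}) otherwise. -/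
theorem hag_aggr_eq_cover_aggregate_general {V : Type*} [DecidableEq V]
    {H : Type*} [CommMonoid H]
    (N : V → Finset V) (h : V → H)
    (hwf : WellFounded (fun u v : V => u ∈ N v))
    (aggr : V → H)
    (haggr_src : ∀ v : V, N v = ∅ → aggr v = h v)
    (haggr : ∀ v : V, N v ≠ ∅ → aggr v = ∏ u ∈ N v, aggr u)
    (cover : V → Finset V)
    (hcover_src : ∀ v : V, N v = ∅ → cover v = {v})
    (hcover : ∀ v : V, N v ≠ ∅ → cover v = (N v).biUnion cover)
    (hdisj : ∀ v : V, ∀ u₁ ∈ N v, ∀ u₂ ∈ N v, u₁ ≠ u₂ → Disjoint (cover u₁) (cover u₂)) :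
    ∀ v : V, aggr v = ∏ u ∈ cover v, h u := by
  intro v
  induction v using hwf.induction with
  | _ v ih =>
    by_cases hv : N v = ∅
    · rw [haggr_src v hv, hcover_src v hv, Finset.prod_singleton]
    · calc aggr v = ∏ u ∈ N v, ∏ w ∈ cover u, h w :=
            (haggr v hv).trans (Finset.prod_congr rfl ih)
        _ = ∏ w ∈ (N v).biUnion cover, h w := (Finset.prod_biUnion (hdisj v)).symm
        _ = ∏ w ∈ cover v, h w := by rw [hcover v hv]

/-- If the covers of the in-neighbors of every node are pairwise disjoint, then the
hierarchical aggregation `aggr v` equals the flat aggregation of the base values over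
`cover v`. Aggregation is the product in a commutative monoid `H`. -/
theorem hag_aggr_eq_cover_aggregate {V : Type*} [Fintype V] [DecidableEq V]
    {H : Type*} [CommMonoid H]
    (N : V → Finset V) (h : V → H)
    (hwf : WellFounded (fun u v : V => u ∈ N v))
    (aggr : V → H)
    (haggr_src : ∀ v : V, N v = ∅ → aggr v = h v)
    (haggr : ∀ v : V, N v ≠ ∅ → aggr v = ∏ u ∈ N v, aggr u)
    (cover : V → Finset V)
    (hcover_src : ∀ v : V, N v = ∅ → cover v = {v})
    (hcover : ∀ v : V, N v ≠ ∅ → cover v = (N v).biUnion cover)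
    (hdisj : ∀ v : V, ∀ u₁ ∈ N v, ∀ u₂ ∈ N v, u₁ ≠ u₂ → Disjoint (cover u₁) (cover u₂)) :
    ∀ v : V, aggr v = ∏ u ∈ cover v, h u :=
  hag_aggr_eq_cover_aggregate_general N h hwf aggr haggr_src haggr cover hcover_src hcover hdisj
end

section
/- A GNN-graph G and a HAG Ĝ produce the same aggregated values a_v for all v ∈ V if cover(v) = N(v) for all v ∈ V, where N(v) is v's neighbor set in G, Aggregate is commutative and associative, and covers of in-neighbors are pairwise disjoint. That is, Aggregate({h_u : u ∈ N(v)}) equals the value computed by the HAG's hierarchical aggregation at v. -/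
/-! By well-founded induction over the HAG, every node computes the product of `h` over its
cover: the covers of its in-neighbors are disjoint, so the product over the in-neighbors
regroups into a product over the union of their covers. The same regrouping at the
in-neighbors of `v`, whose covers make up `N(v)`, gives the flat aggregation. -/

namespace HAG

variable {ι V H : Type*} [DecidableEq V] [CommMonoid H]

theorem prod_eq_prod_biUnion_cover {s : Finset ι} {cover : ι → Finset V} {f : ι → H}
    {h : V → H} (hdisj : ∀ u₁ ∈ s, ∀ u₂ ∈ s, u₁ ≠ u₂ → Disjoint (cover u₁) (cover u₂))
    (hf : ∀ u ∈ s, f u = ∏ x ∈ cover u, h x) :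
    ∏ u ∈ s, f u = ∏ x ∈ s.biUnion cover, h x := by
  rw [Finset.prod_biUnion hdisj]
  exact Finset.prod_congr rfl hf

theorem hhat_eq_prod_cover {A : Type*} {Nhat : V ⊕ A → Finset (V ⊕ A)}
    (hwf : WellFounded (fun u w : V ⊕ A => u ∈ Nhat w)) {h : V → H} {hhat : V ⊕ A → H}
    (hhat_src : ∀ v : V, hhat (Sum.inl v) = h v)
    (hhat_agg : ∀ a : A, hhat (Sum.inr a) = ∏ u ∈ Nhat (Sum.inr a), hhat u)
    {cover : V ⊕ A → Finset V}
    (hcover_src : ∀ v : V, cover (Sum.inl v) = {v})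
    (hcover_agg : ∀ a : A, cover (Sum.inr a) = (Nhat (Sum.inr a)).biUnion cover)
    (hdisj : ∀ w : V ⊕ A, ∀ u₁ ∈ Nhat w, ∀ u₂ ∈ Nhat w, u₁ ≠ u₂ →
      Disjoint (cover u₁) (cover u₂))
    (w : V ⊕ A) : hhat w = ∏ x ∈ cover w, h x := by
  induction w using hwf.induction with
  | _ w ih =>
    cases w with
    | inl v => rw [hhat_src, hcover_src, Finset.prod_singleton]
    | inr a =>
      rw [hhat_agg, hcover_agg]
      exact prod_eq_prod_biUnion_cover (hdisj _) ih

end HAG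

theorem hag_equivalent_same_output_general {V A : Type*} [DecidableEq V]
    {H : Type*} [CommMonoid H]
    (Nbr : V → Finset V)                       -- neighbor sets in the GNN-graph G
    (Nhat : V ⊕ A → Finset (V ⊕ A))            -- in-neighbor sets in the HAG
    (hwf : WellFounded (fun u w : V ⊕ A => u ∈ Nhat w))
    (h : V → H)                                -- previous-layer activations
    (hhat : V ⊕ A → H)                         -- values computed by the HAG
    (hhat_src : ∀ v : V, hhat (Sum.inl v) = h v)
    (hhat_agg : ∀ a : A, hhat (Sum.inr a) = ∏ u ∈ Nhat (Sum.inr a), hhat u)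
    (cover : V ⊕ A → Finset V)
    (hcover_src : ∀ v : V, cover (Sum.inl v) = {v})
    (hcover_agg : ∀ a : A, cover (Sum.inr a) = (Nhat (Sum.inr a)).biUnion cover)
    (hdisj : ∀ w : V ⊕ A, ∀ u₁ ∈ Nhat w, ∀ u₂ ∈ Nhat w, u₁ ≠ u₂ →
      Disjoint (cover u₁) (cover u₂))
    (outIn : V → Finset (V ⊕ A))               -- in-neighbors used to compute a_v
    (hout_disj : ∀ v : V, ∀ u₁ ∈ outIn v, ∀ u₂ ∈ outIn v, u₁ ≠ u₂ →
      Disjoint (cover u₁) (cover u₂))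
    (hcov_eq : ∀ v : V, (outIn v).biUnion cover = Nbr v) :
    ∀ v : V, ∏ u ∈ outIn v, hhat u = ∏ x ∈ Nbr v, h x := by
  intro v
  rw [← hcov_eq v]
  exact HAG.prod_eq_prod_biUnion_cover (hout_disj v) fun u _ =>
    HAG.hhat_eq_prod_cover hwf hhat_src hhat_agg hcover_src hcover_agg hdisj u

/-- Equivalence of a GNN-graph and a HAG: if `cover` of the in-neighbors used to
compute node `v` equals `v`'s neighbor set `Nbr v` in the GNN-graph (and covers are
pairwise disjoint, aggregation being a commutative monoid product), then the HAG's
hierarchically computed aggregated value at `v` equals the flat aggregation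
`∏ u ∈ Nbr v, h u`. -/
theorem hag_equivalent_same_output {V A : Type*} [Fintype V] [DecidableEq V]
    [Fintype A] [DecidableEq A] {H : Type*} [CommMonoid H]
    (Nbr : V → Finset V)                       -- neighbor sets in the GNN-graph G
    (Nhat : V ⊕ A → Finset (V ⊕ A))            -- in-neighbor sets in the HAG
    (hwf : WellFounded (fun u w : V ⊕ A => u ∈ Nhat w))
    (hsrc : ∀ v : V, Nhat (Sum.inl v) = ∅)     -- original nodes are sources
    (hagg : ∀ a : A, Nhat (Sum.inr a) ≠ ∅)     -- aggregation nodes are not sources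
    (h : V → H)                                -- previous-layer activations
    (hhat : V ⊕ A → H)                         -- values computed by the HAG
    (hhat_src : ∀ v : V, hhat (Sum.inl v) = h v)
    (hhat_agg : ∀ a : A, hhat (Sum.inr a) = ∏ u ∈ Nhat (Sum.inr a), hhat u)
    (cover : V ⊕ A → Finset V)
    (hcover_src : ∀ v : V, cover (Sum.inl v) = {v})
    (hcover_agg : ∀ a : A, cover (Sum.inr a) = (Nhat (Sum.inr a)).biUnion cover)
    (hdisj : ∀ w : V ⊕ A, ∀ u₁ ∈ Nhat w, ∀ u₂ ∈ Nhat w, u₁ ≠ u₂ →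
      Disjoint (cover u₁) (cover u₂))
    (outIn : V → Finset (V ⊕ A))               -- in-neighbors used to compute a_v
    (hout_disj : ∀ v : V, ∀ u₁ ∈ outIn v, ∀ u₂ ∈ outIn v, u₁ ≠ u₂ →
      Disjoint (cover u₁) (cover u₂))
    (hcov_eq : ∀ v : V, (outIn v).biUnion cover = Nbr v) :
    ∀ v : V, ∏ u ∈ outIn v, hhat u = ∏ x ∈ Nbr v, h x :=
  hag_equivalent_same_output_general Nbr Nhat hwf h hhat hhat_src hhat_agg cover hcover_src
    hcover_agg hdisj outIn hout_disj hcov_eq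
end

section
/- Each iteration of the HAG search algorithm that merges a binary aggregation pair (v₁, v₂) with redundancy r ≥ 2 strictly decreases the cost function: it adds one aggregation node and two edges while removing 2r edges and adding r edges, so the quantity |Ê| - |V_A| decreases by exactly r - 1 ≥ 1. -/
/-!
The merge deletes the `2r` edges `(v₁, u), (v₂, u)` with `u` in the redundancy set `R`, all of
which lie in `Ê`, and inserts the `r + 2` edges `(w, u)`, `(v₁, w)`, `(v₂, w)`, none of which lies
in `Ê` because `w` is fresh; it also adds the single node `w`. Hence `|Ê| - |V_A|` changes by
`-2r + (r + 2) - 1 = -(r - 1)`.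
-/

namespace Finset

variable {α β : Type*} [DecidableEq α] [DecidableEq β]

theorem card_image_prodMk (a : α) (R : Finset β) : (R.image (a, ·)).card = R.card :=
  card_image_of_injective R (Prod.mk_right_injective a)

theorem card_image_prodMk_union_image_prodMk {a b : α} (hab : a ≠ b) (R : Finset β) :
    (R.image (a, ·) ∪ R.image (b, ·)).card = 2 * R.card := by
  have hdisj : Disjoint (R.image (a, ·)) (R.image (b, ·)) := by
    simp only [disjoint_left, mem_image]
    rintro _ ⟨x, -, rfl⟩ ⟨y, -, hy⟩
    exact hab (Prod.ext_iff.mp hy).1.symm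
  rw [card_union_of_disjoint hdisj, card_image_prodMk, card_image_prodMk, two_mul]

theorem card_pair_union_image_prodMk {a b c : α} (hab : a ≠ b) (hca : c ≠ a) (hcb : c ≠ b)
    (x : β) (R : Finset β) :
    ({(a, x), (b, x)} ∪ R.image (c, ·)).card = 2 + R.card := by
  have hdisj : Disjoint {(a, x), (b, x)} (R.image (c, ·)) := by
    simp only [disjoint_left, mem_insert, mem_singleton, mem_image]
    rintro _ (rfl | rfl) ⟨y, -, hy⟩
    exacts [hca (Prod.ext_iff.mp hy).1, hcb (Prod.ext_iff.mp hy).1]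
  rw [card_union_of_disjoint hdisj, card_pair (by simpa using hab), card_image_prodMk]

theorem card_sdiff_union_of_subset_of_disjoint {E S T : Finset α} (hS : S ⊆ E)
    (hT : Disjoint E T) : (((E \ S) ∪ T).card : ℤ) = E.card - S.card + T.card := by
  rw [card_union_of_disjoint (hT.mono_left sdiff_subset), card_sdiff_of_subset hS, Nat.cast_add, Nat.cast_sub (card_le_card hS)]

end Finset

open Finset in
/-- One iteration of the HAG search algorithm: merging a pair `(v₁, v₂)` with
redundancy `r ≥ 2` by introducing a fresh aggregation node `w` decreases the
quantity `|Ê| - |V_A|` (hence the cost) by exactly `r - 1 ≥ 1`. -/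
theorem hag_merge_decreases_cost {W : Type*} [Fintype W] [DecidableEq W]
    (VA : Finset W) (E : Finset (W × W)) (v₁ v₂ w : W)
    (hne : v₁ ≠ v₂)
    (hwfresh : ∀ u : W, (w, u) ∉ E ∧ (u, w) ∉ E)
    (hwVA : w ∉ VA) (hwv₁ : w ≠ v₁) (hwv₂ : w ≠ v₂)
    (R : Finset W) (hR : R = Finset.univ.filter (fun u => (v₁, u) ∈ E ∧ (v₂, u) ∈ E))
    (r : ℕ) (hr : r = R.card) (hr2 : 2 ≤ r)
    (E' : Finset (W × W))
    (hE' : E' = (E \ (R.image (fun u => (v₁, u)) ∪ R.image (fun u => (v₂, u))))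
      ∪ ({(v₁, w), (v₂, w)} ∪ R.image (fun u => (w, u)))) :
    (E'.card : ℤ) - (insert w VA).card = (E.card : ℤ) - VA.card - (r - 1) ∧
    (1 : ℤ) ≤ r - 1 := by
  have hremoved : R.image (v₁, ·) ∪ R.image (v₂, ·) ⊆ E := by
    intro e he
    simp only [hR, mem_union, mem_image, mem_filter, mem_univ, true_and] at he
    rcases he with ⟨u, hu, rfl⟩ | ⟨u, hu, rfl⟩
    exacts [hu.1, hu.2]
  have hadded : Disjoint E ({(v₁, w), (v₂, w)} ∪ R.image (w, ·)) := by
    simp only [disjoint_right, mem_union, mem_insert, mem_singleton, mem_image]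
    rintro _ ((rfl | rfl) | ⟨u, -, rfl⟩)
    exacts [(hwfresh v₁).2, (hwfresh v₂).2, (hwfresh u).1]
  rw [hE', card_sdiff_union_of_subset_of_disjoint hremoved hadded,
    card_image_prodMk_union_image_prodMk hne, card_pair_union_image_prodMk hne hwv₁ hwv₂,
    card_insert_of_notMem hwVA, ← hr]
  push_cast
  constructor
  · ring
  · linarith [(by exact_mod_cast hr2 : (2 : ℤ) ≤ r)]
end
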